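/- arXiv:1706.01008 — 2 statements merged into one kernel-verified Lean document; each statement's English description precedes it below -/
import Mathlib

section
/- Every integer n > 1 satisfying F_n = D_n is a prime power pseudoperfect number, i.e., it satisfies ∑_{p^k ∣ n} 1/p^k + 1/n = 1, where the sum ranges over all prime power divisors p^k of n (p prime, k ≥ 1). -/
/-- The map `f` from the paper: `f n = n - 1` if `n` is prime, and otherwise
`f n = n - d n` where `d n = n / n.minFac` is the largest divisor `d` of `n`
with `1 < d < n`. -/
def egf (n : ℕ) : ℕ := if n.Prime then n - 1 else n - n / n.minFac

/-- `F n = {n, f n, f (f n), …, 1}`: the set of iterates of `f` starting at `n`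
(the iterates strictly decrease to `1`; we collect all positive iterates). -/
def Fset (n : ℕ) : Set ℕ := {m | 0 < m ∧ ∃ i : ℕ, egf^[i] n = m}

/-- The sum `∑_{p^k ∣ n} 1/p^k` over all prime power divisors `p^k` of `n`. -/
def ppSum (n : ℕ) : ℚ := ∑ d ∈ n.divisors.filter (fun d => IsPrimePow d), (1 : ℚ) / d

/-- A prime power pseudoperfect number: `n > 1` with `∑_{p^k ∣ n} 1/p^k + 1/n = 1`. -/
def PPPseudoperfect (n : ℕ) : Prop := 1 < n ∧ ppSum n + 1 / n = 1

/-- A prime power Giuga number: a composite `n` with `∑_{p^k ∣ n} 1/p^k - 1/n` a positive integer. -/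
def PPGiuga (n : ℕ) : Prop :=
  1 < n ∧ ¬ n.Prime ∧ ∃ m : ℕ, 0 < m ∧ ppSum n - 1 / n = m

/-- A primary pseudoperfect number: `n > 1` with `∑_{p ∣ n} 1/p + 1/n = 1`. -/
def PrimaryPseudoperfect (n : ℕ) : Prop :=
  1 < n ∧ (∑ p ∈ n.primeFactors, (1 : ℚ) / p) + 1 / n = 1

/-- A Giuga number: a composite `n` with `∑_{p ∣ n} 1/p - 1/n` a positive integer. -/
def Giuga (n : ℕ) : Prop :=
  1 < n ∧ ¬ n.Prime ∧ ∃ m : ℕ, 0 < m ∧ (∑ p ∈ n.primeFactors, (1 : ℚ) / p) - 1 / n = m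

/-- A pseudoperfect number: a positive integer that is the sum of a nonempty set of
distinct divisors `d` with `0 < d < n`. -/
def Pseudoperfect (n : ℕ) : Prop :=
  0 < n ∧ ∃ s : Finset ℕ, s ⊆ n.properDivisors ∧ s.Nonempty ∧ ∑ d ∈ s, d = n

/-! ### Auxiliary lemmas about `egf` -/

lemma egf_eq (x : ℕ) : egf x = x - x / x.minFac := by
  unfold egf
  split_ifs with h
  · rw [h.minFac_eq, Nat.div_self h.pos]
  · rfl

lemma egf_le (x : ℕ) : egf x ≤ x := by
  rw [egf_eq]; exact Nat.sub_le _ _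

lemma egf_lt {x : ℕ} (hx : 1 < x) : egf x < x := by
  rw [egf_eq]
  have h1 : 1 ≤ x / x.minFac :=
    (Nat.one_le_div_iff (Nat.minFac_pos x)).mpr (Nat.minFac_le (by omega))
  set y := x / x.minFac with hy
  omega

lemma egf_prime {p : ℕ} (hp : p.Prime) : egf p = p - 1 := by
  unfold egf; rw [if_pos hp]

lemma iter_le_self (y : ℕ) (k : ℕ) : egf^[k] y ≤ y := by
  induction k with
  | zero => simp
  | succ k ih =>
    rw [Function.iterate_succ_apply']
    exact le_trans (egf_le _) ih

lemma iter_anti (y : ℕ) {i j : ℕ} (hij : i ≤ j) : egf^[j] y ≤ egf^[i] y := by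
  obtain ⟨k, rfl⟩ := Nat.exists_eq_add_of_le hij
  rw [add_comm, Function.iterate_add_apply]
  exact iter_le_self _ _

/-- The key structure lemma: if `Fset n` is the set of divisors of `n`, then
`n = m * P ^ a` where `P` is prime, `m + 1 = P`, and either `m = 1` or `m`
again satisfies the hypothesis. -/
lemma structure_lemma (n : ℕ) (hn : 1 < n) (h : Fset n = (n.divisors : Set ℕ)) :
    ∃ m P a : ℕ, P.Prime ∧ 0 < a ∧ m + 1 = P ∧ n = m * P ^ a ∧
      (m = 1 ∨ (1 < m ∧ Fset m = (m.divisors : Set ℕ))) := by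
  have hn0 : n ≠ 0 := by omega
  have hdvd_of_F : ∀ x : ℕ, (0 < x ∧ ∃ i, egf^[i] n = x) → x ∣ n := by
    intro x hx
    have hx' : x ∈ Fset n := hx
    rw [h] at hx'
    exact (Nat.mem_divisors.mp hx').1
  have hF_of_dvd : ∀ x : ℕ, x ∣ n → 0 < x → (∃ i, egf^[i] n = x) := by
    intro x hx hx0
    have hx' : x ∈ (n.divisors : Set ℕ) := by
      simp only [Finset.mem_coe, Nat.mem_divisors]
      exact ⟨hx, hn0⟩
    rw [← h] at hx'
    exact hx'.2
  have hne : n.primeFactors.Nonempty := Nat.nonempty_primeFactors.mpr hn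
  set P := n.primeFactors.max' hne with hPdef
  have hPmem : P ∈ n.primeFactors := Finset.max'_mem _ hne
  have hP : P.Prime := Nat.prime_of_mem_primeFactors hPmem
  have hPd : P ∣ n := Nat.dvd_of_mem_primeFactors hPmem
  have hmax : ∀ q ∈ n.primeFactors, q ≤ P := fun q hq => Finset.le_max' _ q hq
  set a := n.factorization P with hadef
  have ha : 0 < a := hP.factorization_pos_of_dvd hn0 hPd
  set m := n / P ^ a with hmdef
  have hnm : n = m * P ^ a := by
    rw [hmdef, hadef, Nat.div_mul_cancel (Nat.ordProj_dvd n P)]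
  have hPm : ¬ P ∣ m := Nat.not_dvd_ordCompl hP hn0
  have hm_pos : 0 < m := Nat.ordCompl_pos P hn0
  have hm_dvd_n : m ∣ n := Nat.ordCompl_dvd n P
  have hcop : ∀ d : ℕ, d ∣ n → ¬ P ∣ d → d ∣ m := by
    intro d hdn hPd'
    have hc : Nat.Coprime d (P ^ a) :=
      Nat.Coprime.pow_right a (Nat.coprime_comm.mp (hP.coprime_iff_not_dvd.mpr hPd'))
    exact hc.dvd_of_dvd_mul_right (hnm ▸ hdn)
  by_cases hm1 : m = 1
  · -- n is a prime power; show P = 2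
    obtain ⟨i, hi⟩ := hF_of_dvd P hPd hP.pos
    have hP1 : P - 1 ∣ n := by
      apply hdvd_of_F
      refine ⟨by have := hP.two_le; omega, ⟨i + 1, ?_⟩⟩
      rw [Function.iterate_succ_apply', hi, egf_prime hP]
    have hcp : Nat.Coprime (P - 1) n := by
      have h1 : Nat.Coprime (P - 1) P := by
        have h2 := hP.two_le
        have h3 : P - 1 + 1 = P := by omega
        rw [← h3]
        simp
      rw [hnm, hm1, one_mul]
      exact h1.pow_right a
    have hP1' : P - 1 = 1 := hcp.eq_one_of_dvd hP1
    exact ⟨m, P, a, hP, ha, by have := hP.two_le; omega, hnm, Or.inl hm1⟩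
  · -- m > 1 : find the predecessor s of m in the chain
    have hm1' : 1 < m := by omega
    have hmn : m < n := by
      have hPa : 2 ≤ P ^ a := by
        calc 2 ≤ P := hP.two_le
        _ ≤ P ^ a := Nat.le_self_pow (by omega) P
      nlinarith [hnm]
    obtain ⟨i, hi⟩ := hF_of_dvd m hm_dvd_n hm_pos
    have hi0 : i ≠ 0 := by
      intro h0; rw [h0] at hi; simp at hi; omega
    set s := egf^[i - 1] n with hsdef
    have hs_egf : egf s = m := by
      have h4 : i - 1 + 1 = i := by omega
      have h5 : egf^[i - 1 + 1] n = egf (egf^[i - 1] n) := Function.iterate_succ_apply' egf _ n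
      rw [hsdef, ← h5, h4, hi]
    have hs2 : 2 ≤ s := by
      by_contra hs
      interval_cases s <;> simp [egf] at hs_egf <;> omega
    have hs_mem : s ∣ n := hdvd_of_F s ⟨by omega, ⟨i - 1, rfl⟩⟩
    have hms : m < s := hs_egf ▸ egf_lt (by omega)
    have hPs : P ∣ s := by
      by_contra hPs
      exact absurd (Nat.le_of_dvd hm_pos (hcop s hs_mem hPs)) (by omega)
    set p := s.minFac with hpdef
    have hp : p.Prime := Nat.minFac_prime (by omega)
    have hps : p ∣ s := Nat.minFac_dvd s
    have hpn : p ∣ n := hps.trans hs_mem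
    have hpP : p ≤ P := hmax p (Nat.mem_primeFactors.mpr ⟨hp, hpn, hn0⟩)
    have hm_eq : m = s - s / p := by rw [← hs_egf, egf_eq]
    have hsp_dvd : s / p ∣ s := Nat.div_dvd_of_dvd hps
    by_cases hpeq : p = P
    · have ht : s / p ∣ n := hsp_dvd.trans hs_mem
      by_cases ht1 : s / p = 1
      · -- s = P and m = P - 1
        have hsP : s = P := by
          have h5 := Nat.div_mul_cancel hps
          rw [ht1, one_mul] at h5
          omega
        have hmP : m + 1 = P := by
          have h6 := hP.two_le
          have h7 : m = s - 1 := by rw [hm_eq, ht1]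
          omega
        refine ⟨m, P, a, hP, ha, hmP, hnm, Or.inr ⟨hm1', ?_⟩⟩
        -- Fset m = divisors m
        ext x
        simp only [Fset, Set.mem_setOf_eq, Finset.mem_coe, Nat.mem_divisors]
        constructor
        · rintro ⟨hx0, j, rfl⟩
          have hxF : egf^[j] m ∣ n := by
            apply hdvd_of_F
            refine ⟨hx0, ⟨j + i, ?_⟩⟩
            rw [Function.iterate_add_apply, hi]
          have hxm : egf^[j] m ≤ m := iter_le_self m j
          have hPx : ¬ P ∣ egf^[j] m := by
            intro hc
            have := Nat.le_of_dvd hx0 hc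
            omega
          exact ⟨hcop _ hxF hPx, by omega⟩
        · rintro ⟨hxm, -⟩
          have hx0 : 0 < x := Nat.pos_of_dvd_of_pos hxm hm_pos
          refine ⟨hx0, ?_⟩
          obtain ⟨j, hj⟩ := hF_of_dvd x (hxm.trans hm_dvd_n) hx0
          rcases le_or_gt i j with hij | hij
          · refine ⟨j - i, ?_⟩
            have h8 : j - i + i = j := by omega
            have h9 : egf^[j - i + i] n = x := by rw [h8, hj]
            rw [Function.iterate_add_apply, hi] at h9
            exact h9
          · have hxge : m ≤ x := by
              rw [← hj, ← hi]
              exact iter_anti n (by omega)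
            have hxle : x ≤ m := Nat.le_of_dvd hm_pos hxm
            refine ⟨0, ?_⟩
            simp only [Function.iterate_zero, id_eq]
            omega
      · exfalso
        have hq : (s / p).minFac.Prime := Nat.minFac_prime ht1
        have hq_dvd_s : (s / p).minFac ∣ s := (Nat.minFac_dvd _).trans hsp_dvd
        have hq_ge : p ≤ (s / p).minFac := Nat.minFac_le_of_dvd hq.two_le hq_dvd_s
        have hq_le : (s / p).minFac ≤ P :=
          hmax _ (Nat.mem_primeFactors.mpr ⟨hq, (Nat.minFac_dvd _).trans ht, hn0⟩)
        have hqP : (s / p).minFac = P := by omega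
        have hPsp : P ∣ s / p := hqP ▸ Nat.minFac_dvd _
        exact hPm (hm_eq ▸ Nat.dvd_sub hPs hPsp)
    · exfalso
      have hsplit : s = p * (s / p) := (Nat.mul_div_cancel' hps).symm
      have hPsp : P ∣ s / p := by
        rcases (Nat.Prime.dvd_mul hP).mp (hsplit ▸ hPs) with h1 | h2
        · exact absurd ((Nat.prime_dvd_prime_iff_eq hP hp).mp h1).symm hpeq
        · exact h2
      exact hPm (hm_eq ▸ Nat.dvd_sub hPs hPsp)

/-! ### `ppSum` computations -/

lemma ppSum_one : ppSum 1 = 0 := by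
  unfold ppSum
  rw [Nat.divisors_one]
  simp [Finset.filter_singleton, not_isPrimePow_one]

lemma ppSum_coprime_mul {a b : ℕ} (ha : a ≠ 0) (hb : b ≠ 0) (hab : Nat.Coprime a b) :
    ppSum (a * b) = ppSum a + ppSum b := by
  unfold ppSum
  rw [← Finset.sum_union]
  · congr 1
    ext q
    simp only [Finset.mem_filter, Nat.mem_divisors, Finset.mem_union, mul_ne_zero ha hb,
      and_true, ha, hb, ne_eq, not_false_eq_true]
    constructor
    · rintro ⟨hq, hpp⟩
      rcases (hab.isPrimePow_dvd_mul hpp).mp hq with h1 | h1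
      · exact Or.inl ⟨h1, hpp⟩
      · exact Or.inr ⟨h1, hpp⟩
    · rintro (⟨hq, hpp⟩ | ⟨hq, hpp⟩)
      · exact ⟨hq.mul_right b, hpp⟩
      · exact ⟨hq.mul_left a, hpp⟩
  · rw [Finset.disjoint_left]
    rintro q hq1 hq2
    simp only [Finset.mem_filter, Nat.mem_divisors] at hq1 hq2
    have h1 : q ∣ Nat.gcd a b := Nat.dvd_gcd hq1.1.1 hq2.1.1
    rw [Nat.Coprime] at hab
    rw [hab, Nat.dvd_one] at h1
    exact not_isPrimePow_one (h1 ▸ hq1.2)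

lemma ppSum_prime_pow_succ {P : ℕ} (hP : P.Prime) (a : ℕ) :
    ppSum (P ^ (a + 1)) = ppSum (P ^ a) + 1 / ((P : ℚ) ^ (a + 1)) := by
  unfold ppSum
  have hP0 : P ≠ 0 := hP.ne_zero
  have hkey : (P ^ (a + 1)).divisors.filter (fun d => IsPrimePow d) =
      insert (P ^ (a + 1)) ((P ^ a).divisors.filter (fun d => IsPrimePow d)) := by
    ext q
    constructor
    · intro hq
      rw [Finset.mem_filter, Nat.mem_divisors] at hq
      obtain ⟨⟨hdvd, -⟩, hpp⟩ := hq
      obtain ⟨k, hk, rfl⟩ := (Nat.dvd_prime_pow hP).mp hdvd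
      rw [Finset.mem_insert, Finset.mem_filter, Nat.mem_divisors]
      rcases eq_or_lt_of_le hk with h1 | h1
      · exact Or.inl (by rw [h1])
      · exact Or.inr ⟨⟨pow_dvd_pow P (by omega), pow_ne_zero _ hP0⟩, hpp⟩
    · intro hq
      rw [Finset.mem_insert, Finset.mem_filter, Nat.mem_divisors] at hq
      rw [Finset.mem_filter, Nat.mem_divisors]
      rcases hq with rfl | ⟨⟨hdvd, -⟩, hpp⟩
      · exact ⟨⟨dvd_rfl, pow_ne_zero _ hP0⟩, hP.isPrimePow.pow (by omega)⟩
      · exact ⟨⟨hdvd.trans (pow_dvd_pow P (by omega)), pow_ne_zero _ hP0⟩, hpp⟩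
  rw [hkey, Finset.sum_insert, add_comm]
  · push_cast
    ring
  · simp only [Finset.mem_filter, Nat.mem_divisors]
    rintro ⟨h1, -⟩
    have h2 : P ^ (a + 1) ≤ P ^ a := Nat.le_of_dvd (by positivity) h1.1
    have h3 : P ^ a < P ^ (a + 1) := Nat.pow_lt_pow_succ hP.one_lt
    omega

lemma ppSum_geom_eq {m P : ℕ} (hP : P.Prime) (hm : m + 1 = P) (a : ℕ) :
    ppSum (P ^ a) + 1 / ((m : ℚ) * (P : ℚ) ^ a) = 1 / (m : ℚ) := by
  have hm0 : 0 < m := by have := hP.two_le; omega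
  have hmQ : (m : ℚ) ≠ 0 := by positivity
  have hPQ : (0 : ℚ) < (P : ℚ) := by exact_mod_cast hP.pos
  induction a with
  | zero => simp [ppSum_one]
  | succ a ih =>
    rw [ppSum_prime_pow_succ hP]
    have hPa : ((P : ℚ) ^ a) ≠ 0 := by positivity
    have hmP : (m : ℚ) = (P : ℚ) - 1 := by
      have : ((m : ℚ) + 1) = (P : ℚ) := by exact_mod_cast congrArg (Nat.cast : ℕ → ℚ) hm
      linarith
    have key : 1 / ((P : ℚ) ^ (a + 1)) + 1 / ((m : ℚ) * (P : ℚ) ^ (a + 1)) =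
        1 / ((m : ℚ) * (P : ℚ) ^ a) := by
      have hP1 : (P : ℚ) - 1 ≠ 0 := by rw [← hmP]; simpa using hmQ
      have h2 : (P : ℚ) ≠ 0 := ne_of_gt hPQ
      have h3 : (P : ℚ) ^ a ≠ 0 := pow_ne_zero _ h2
      have h4 : (P : ℚ) ^ (a + 1) ≠ 0 := pow_ne_zero _ h2
      rw [hmP, div_add_div _ _ h4 (mul_ne_zero hP1 h4),
        div_eq_div_iff (mul_ne_zero h4 (mul_ne_zero hP1 h4)) (mul_ne_zero hP1 h3)]
      ring
    linarith [ih]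

/-! ### Main induction -/

lemma stmt2_aux : ∀ n : ℕ, 1 < n → Fset n = (n.divisors : Set ℕ) →
    ppSum n + 1 / (n : ℚ) = 1 := by
  intro n
  induction n using Nat.strong_induction_on with
  | _ n IH =>
    intro hn h
    obtain ⟨m, P, a, hP, ha, hmP, hnm, hcase⟩ := structure_lemma n hn h
    have hm0 : 0 < m := by have := hP.two_le; omega
    have hPa0 : P ^ a ≠ 0 := pow_ne_zero _ hP.ne_zero
    have hcopmP : Nat.Coprime m (P ^ a) := by
      have h1 : Nat.Coprime m P := by
        have h3 : m + 1 = P := hmP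
        rw [← h3]
        simp
      exact h1.pow_right a
    have hsplit : ppSum n = ppSum m + ppSum (P ^ a) := by
      rw [hnm]; exact ppSum_coprime_mul (by omega) hPa0 hcopmP
    have hgeom := ppSum_geom_eq hP hmP a
    have hnQ : ((n : ℚ)) = (m : ℚ) * (P : ℚ) ^ a := by
      rw [hnm]; push_cast; ring
    have hm_eq_1 : ppSum m + 1 / (m : ℚ) = 1 := by
      rcases hcase with rfl | ⟨hm1, hFm⟩
      · simp [ppSum_one]
      · have hmn : m < n := by
          have hPa : 2 ≤ P ^ a := by
            calc 2 ≤ P := hP.two_le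
            _ ≤ P ^ a := Nat.le_self_pow (by omega) P
          nlinarith [hnm]
        exact IH m hmn hm1 hFm
    rw [hsplit, hnQ]
    linarith [hgeom, hm_eq_1]



/-- every integer `n > 1` with `F n = D n` is a prime power
pseudoperfect number, i.e. `∑_{p^k ∣ n} 1/p^k + 1/n = 1`. -/
theorem stmt2 (n : ℕ) (hn : 1 < n) (h : Fset n = (n.divisors : Set ℕ)) :
    ppSum n + 1 / (n : ℚ) = 1 := stmt2_aux n hn h
end

section
/- Every primary pseudoperfect number greater than 2 is a pseudoperfect number. -/
/-! Multiplying `∑ 1/p + 1/n = 1` by `n` gives `n = 1 + ∑_{p ∣ n} n/p`, a sum of distinct proper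
divisors of `n`. The cofactor `1` does not collide with any `n/p` as soon as `n` is not prime, and a
prime `n` satisfies the equation only for `n = 2`. -/

theorem PrimaryPseudoperfect.sum_div_primeFactors_add_one {n : ℕ} (h : PrimaryPseudoperfect n) :
    ∑ p ∈ n.primeFactors, n / p + 1 = n := by
  obtain ⟨hn, heq⟩ := h
  have hnQ : (n : ℚ) ≠ 0 := by positivity
  have hcast : ∀ p ∈ n.primeFactors, ((n / p : ℕ) : ℚ) = n * (1 / p) := fun p hp => by
    rw [Nat.cast_div (Nat.dvd_of_mem_primeFactors hp)
      (by exact_mod_cast (Nat.prime_of_mem_primeFactors hp).ne_zero)]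
    ring
  have : ((∑ p ∈ n.primeFactors, n / p + 1 : ℕ) : ℚ) = n := calc
    _ = n * (∑ p ∈ n.primeFactors, (1 : ℚ) / p + 1 / n) := by
      push_cast
      rw [Finset.sum_congr rfl hcast, ← Finset.mul_sum, mul_add, mul_one_div_cancel hnQ]
    _ = n := by rw [heq, mul_one]
  exact_mod_cast this

theorem PrimaryPseudoperfect.not_prime {n : ℕ} (h : PrimaryPseudoperfect n) (h2 : 2 < n) :
    ¬ n.Prime := fun hp => by
  have := h.sum_div_primeFactors_add_one
  rw [hp.primeFactors, Finset.sum_singleton, Nat.div_self hp.pos] at this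
  omega

theorem Nat.div_mem_properDivisors_of_mem_primeFactors {n p : ℕ} (hp : p ∈ n.primeFactors) :
    n / p ∈ n.properDivisors := by
  obtain ⟨hp, hpn, hn⟩ := Nat.mem_primeFactors.mp hp
  exact Nat.mem_properDivisors.mpr
    ⟨Nat.div_dvd_of_dvd hpn, Nat.div_lt_self (Nat.pos_of_ne_zero hn) hp.one_lt⟩

theorem Nat.injOn_div_primeFactors (n : ℕ) : Set.InjOn (n / ·) n.primeFactors := by
  intro p hp q hq hpq
  obtain ⟨-, hpn, hn⟩ := Nat.mem_primeFactors.mp hp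
  exact (Nat.div_eq_iff_eq_of_dvd_dvd hn hpn (Nat.dvd_of_mem_primeFactors hq)).mp hpq

theorem Nat.one_notMem_image_div_primeFactors {n : ℕ} (hn : ¬ n.Prime) :
    1 ∉ n.primeFactors.image (n / ·) := by
  simp only [Finset.mem_image, not_exists, not_and]
  intro p hp hp1
  obtain ⟨hp, hpn, hn0⟩ := Nat.mem_primeFactors.mp hp
  rw [← Nat.div_self (Nat.pos_of_ne_zero hn0)] at hp1
  exact hn ((Nat.div_eq_iff_eq_of_dvd_dvd hn0 hpn dvd_rfl).mp hp1 ▸ hp)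

/-- every primary pseudoperfect number greater than `2` is a
pseudoperfect number. -/
theorem stmt14 (n : ℕ) (h : PrimaryPseudoperfect n) (h2 : 2 < n) :
    Pseudoperfect n := by
  refine ⟨by omega, insert 1 (n.primeFactors.image (n / ·)), ?_, Finset.insert_nonempty _ _, ?_⟩
  · refine Finset.insert_subset (Nat.one_mem_properDivisors_iff_one_lt.mpr (by omega)) ?_
    exact Finset.image_subset_iff.mpr fun p hp => Nat.div_mem_properDivisors_of_mem_primeFactors hp
  · rw [Finset.sum_insert (Nat.one_notMem_image_div_primeFactors (h.not_prime h2)),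
      Finset.sum_image (Nat.injOn_div_primeFactors n), add_comm]
    exact h.sum_div_primeFactors_add_one
end
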